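/- arXiv:2508.10782 — 3 statements merged into one kernel-verified Lean document; each statement's English description precedes it below -/
import Mathlib

section
/- Let U be a T×T upper triangular matrix with nonnegative diagonal entries, where T ≥ 2. Then ‖U − I‖_op ≤ 2 log_2(4T) ‖U^T U − I‖_op and ‖U − I‖_op² ≤ 9 log_2(4T) ‖U^T U − I‖_op. -/
open Matrix Finset

noncomputable section

/-- Euclidean norm of a finitely-indexed real vector. -/
def enorm' {ι : Type*} [Fintype ι] (v : ι → ℝ) : ℝ := Real.sqrt (∑ i, v i ^ 2)

/-- Spectral (Euclidean operator) norm of a real matrix. -/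
def opNorm {ι κ : Type*} [Fintype ι] [Fintype κ] (M : Matrix ι κ ℝ) : ℝ :=
  sSup ((fun v => enorm' (M.mulVec v)) '' {v | enorm' v ≤ 1})

/-!
Write `ε = ‖UᵀU - 1‖`. Since `‖U‖² = ‖UᵀU‖ ≤ 1 + ε`, the crude bound `‖U - 1‖² ≤ 4 + 2ε`
settles the case of large `ε`. For small `ε`, `UᵀU` is invertible by a Neumann series, so
`‖U⁻¹‖² = ‖(UᵀU)⁻¹‖ ≤ (1 - ε)⁻¹`, and the diagonal entries of `U` lie within `ε` of `1`.
The strictly upper triangular part of `U` splits into `⌈log₂ T⌉` dyadic levels. Each level is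
block diagonal, its blocks being corners `P U Q`, where `P` projects onto the left and `Q` onto
the right half of a dyadic interval. As `U⁻ᵀ` is lower triangular, `P U⁻ᵀ Q = 0`, hence
`P U Q = P U⁻ᵀ (UᵀU - 1) Q` has norm at most `‖U⁻¹‖ ε ≤ 2ε`. Altogether
`‖U - 1‖ ≤ (1 + 2⌈log₂ T⌉) ε ≤ 2 log₂(4T) ε`.
-/

open scoped Matrix.Norms.L2Operator

lemma enorm'_eq_norm {ι : Type*} [Fintype ι] (v : ι → ℝ) :
    enorm' v = ‖(WithLp.toLp 2 v : EuclideanSpace ℝ ι)‖ := by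
  simp [enorm', EuclideanSpace.norm_eq]

lemma opNorm_eq_l2_opNorm {ι κ : Type*} [Fintype ι] [Fintype κ] [DecidableEq κ]
    (M : Matrix ι κ ℝ) : opNorm M = ‖M‖ := by
  rw [Matrix.l2_opNorm_def, ← ContinuousLinearMap.sSup_unitClosedBall_eq_norm, opNorm]
  congr 1
  ext r
  simp only [Set.mem_image, Set.mem_ofPred_eq, Metric.mem_closedBall, dist_zero_right]
  constructor
  · rintro ⟨v, hv, rfl⟩
    exact ⟨WithLp.toLp 2 v, by rwa [← enorm'_eq_norm], by rw [enorm'_eq_norm]; rfl⟩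
  · rintro ⟨x, hx, rfl⟩
    exact ⟨x.ofLp, by rwa [enorm'_eq_norm], by rw [enorm'_eq_norm]; rfl⟩

lemma Nat.div_two_pow_lt_div_two_pow_iff {t i j : ℕ} (h : i / 2 ^ (t + 1) = j / 2 ^ (t + 1)) :
    i / 2 ^ t < j / 2 ^ t ↔
      i < (2 * (i / 2 ^ (t + 1)) + 1) * 2 ^ t ∧ (2 * (i / 2 ^ (t + 1)) + 1) * 2 ^ t ≤ j := by
  simp only [pow_succ, ← Nat.div_div_eq_div_mul] at h ⊢
  rw [← Nat.div_lt_iff_lt_mul (by positivity), ← Nat.le_div_iff_mul_le (by positivity)]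
  generalize i / 2 ^ t = a at *
  generalize j / 2 ^ t = b at *
  omega

lemma Nat.clog_two_add_one_le_logb_four_mul {T : ℕ} (hT : 1 ≤ T) :
    (Nat.clog 2 T : ℝ) + 1 ≤ Real.logb 2 (4 * T) := by
  have hceil :=
    Nat.ceil_lt_add_one (Real.logb_nonneg one_lt_two (by exact_mod_cast hT : (1 : ℝ) ≤ T))
  have hclog := Real.natCeil_logb_natCast 2 T
  push_cast at hclog
  rw [hclog] at hceil
  have hlog4 : Real.logb 2 4 = 2 := by
    rw [show (4 : ℝ) = 2 ^ 2 by norm_num, Real.logb_pow, Real.logb_self_eq_one one_lt_two]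
    norm_num
  rw [Real.logb_mul (by norm_num) (by positivity), hlog4]
  linarith

namespace Matrix

variable {m n : Type*} [Fintype m] [Fintype n] [DecidableEq n]

lemma l2_opNorm_one_le : ‖(1 : Matrix n n ℝ)‖ ≤ 1 := by
  rw [← diagonal_one, l2_opNorm_diagonal]
  exact (pi_norm_le_iff_of_nonneg zero_le_one).2 fun _ => by simp

lemma l2_opNorm_transpose [DecidableEq m] (A : Matrix m n ℝ) : ‖Aᵀ‖ = ‖A‖ := by
  rw [← conjTranspose_eq_transpose_of_trivial, l2_opNorm_conjTranspose]

lemma l2_opNorm_sq_le (A : Matrix m n ℝ) : ‖A‖ ^ 2 ≤ 1 + ‖Aᵀ * A - 1‖ := by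
  have h := l2_opNorm_conjTranspose_mul_self A
  rw [conjTranspose_eq_transpose_of_trivial] at h
  calc ‖A‖ ^ 2 = ‖1 + (Aᵀ * A - 1)‖ := by rw [add_sub_cancel, h, sq]
    _ ≤ ‖(1 : Matrix n n ℝ)‖ + ‖Aᵀ * A - 1‖ := norm_add_le _ _
    _ ≤ 1 + ‖Aᵀ * A - 1‖ := by grw [l2_opNorm_one_le]

lemma isUnit_of_l2_opNorm_transpose_mul_self_sub_one_lt_one {A : Matrix n n ℝ}
    (h : ‖Aᵀ * A - 1‖ < 1) : IsUnit A := by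
  have hG := (Units.oneSub (1 - Aᵀ * A) (by rwa [norm_sub_rev])).isUnit
  rw [Units.val_oneSub, sub_sub_cancel, isUnit_iff_isUnit_det, det_mul, det_transpose] at hG
  exact (isUnit_iff_isUnit_det A).2 (isUnit_of_mul_isUnit_right hG)

lemma l2_opNorm_inv_sq_le {A : Matrix n n ℝ} (h : ‖Aᵀ * A - 1‖ < 1) :
    ‖A⁻¹‖ ^ 2 ≤ (1 - ‖Aᵀ * A - 1‖)⁻¹ := by
  have hE : ‖1 - Aᵀ * A‖ < 1 := by rwa [norm_sub_rev]
  have hinv : (Aᵀ * A)⁻¹ = ∑' k, (1 - Aᵀ * A) ^ k := by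
    have h := NormedRing.inverse_one_sub _ hE
    rw [sub_sub_cancel] at h
    rw [nonsing_inv_eq_ringInverse, h]
    rfl
  calc ‖A⁻¹‖ ^ 2 = ‖(Aᵀ * A)⁻¹‖ := by
        rw [sq, ← CStarRing.norm_self_mul_star, star_eq_conjTranspose,
          conjTranspose_eq_transpose_of_trivial, transpose_nonsing_inv, Matrix.mul_inv_rev]
    _ ≤ ‖(1 : Matrix n n ℝ)‖ - 1 + (1 - ‖1 - Aᵀ * A‖)⁻¹ :=
        hinv ▸ tsum_geometric_le_of_norm_lt_one _ hE
    _ ≤ (1 - ‖Aᵀ * A - 1‖)⁻¹ := by rw [norm_sub_rev]; linarith [l2_opNorm_one_le (n := n)]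

def coordProj (p : n → Prop) [DecidablePred p] : Matrix n n ℝ :=
  diagonal fun i => if p i then 1 else 0

section coordProj

variable (p q : n → Prop) [DecidablePred p] [DecidablePred q]

lemma l2_opNorm_coordProj_le : ‖coordProj p‖ ≤ 1 := by
  rw [coordProj, l2_opNorm_diagonal]
  exact (pi_norm_le_iff_of_nonneg zero_le_one).2 fun i => by split_ifs <;> simp

lemma coordProj_mul_mul_coordProj_apply (B : Matrix n n ℝ) (i j : n) :
    (coordProj p * B * coordProj q) i j = if p i ∧ q j then B i j else 0 := by
  simp only [coordProj, diagonal_mul, mul_diagonal, ite_and]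
  split_ifs <;> simp

end coordProj

lemma l2_opNorm_le_of_sum_sq_mulVec_le {A : Matrix m n ℝ} {c : ℝ} (hc : 0 ≤ c)
    (h : ∀ v : n → ℝ, ∑ i, (A *ᵥ v) i ^ 2 ≤ c ^ 2 * ∑ i, v i ^ 2) : ‖A‖ ≤ c := by
  rw [l2_opNorm_def]
  refine ContinuousLinearMap.opNorm_le_bound _ hc fun x =>
    (sq_le_sq₀ (norm_nonneg _) (by positivity)).1 ?_
  rw [mul_pow, EuclideanSpace.norm_sq_eq, EuclideanSpace.norm_sq_eq]
  simpa using h x.ofLp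

lemma sum_sq_mulVec_le (A : Matrix m n ℝ) (v : n → ℝ) :
    ∑ i, (A *ᵥ v) i ^ 2 ≤ ‖A‖ ^ 2 * ∑ i, v i ^ 2 := by
  have h := (sq_le_sq₀ (norm_nonneg _) (by positivity)).2 (A.l2_opNorm_mulVec (WithLp.toLp 2 v))
  rw [mul_pow, EuclideanSpace.norm_sq_eq, EuclideanSpace.norm_sq_eq] at h
  simpa using h

lemma sq_apply_le_l2_opNorm_sq (A : Matrix m n ℝ) (i : m) (j : n) : A i j ^ 2 ≤ ‖A‖ ^ 2 :=
  calc A i j ^ 2 = (A *ᵥ Pi.single j 1) i ^ 2 := by simp [mulVec_single]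
    _ ≤ ∑ k, (A *ᵥ Pi.single j 1) k ^ 2 :=
        single_le_sum (f := fun k => (A *ᵥ Pi.single j 1) k ^ 2) (fun _ _ => sq_nonneg _)
          (mem_univ i)
    _ ≤ ‖A‖ ^ 2 * ∑ k, (Pi.single j 1 : n → ℝ) k ^ 2 := sum_sq_mulVec_le _ _
    _ = ‖A‖ ^ 2 := by simp [Pi.single_apply]

lemma l2_opNorm_blockwise_le {β : Type*} [DecidableEq β] (g : n → β) (f : β → Matrix n n ℝ)
    {c : ℝ} (hc : 0 ≤ c) (hf : ∀ b, ‖f b‖ ≤ c) :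
    ‖(of fun i j => if g i = g j then f (g i) i j else 0 : Matrix n n ℝ)‖ ≤ c := by
  refine l2_opNorm_le_of_sum_sq_mulVec_le hc fun v => ?_
  set w : β → n → ℝ := fun b j => if g j = b then v j else 0
  have hg : ∀ i ∈ (univ : Finset n), g i ∈ univ.image g := fun i _ =>
    mem_image_of_mem g (mem_univ i)
  have hrow : ∀ i, (of (fun i j => if g i = g j then f (g i) i j else 0) *ᵥ v) i =
      (f (g i) *ᵥ w (g i)) i := by
    intro i
    simp only [mulVec, dotProduct, of_apply, w]
    refine sum_congr rfl fun j _ => ?_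
    by_cases hj : g i = g j
    · simp [hj]
    · simp [hj, Ne.symm hj]
  have hw : ∀ b, ∑ j, w b j ^ 2 = ∑ j ∈ univ with g j = b, v j ^ 2 := by
    intro b
    rw [sum_filter]
    exact sum_congr rfl fun j _ => by split_ifs <;> simp [w, *]
  rw [← sum_fiberwise_of_maps_to hg]
  calc ∑ b ∈ univ.image g, ∑ i ∈ univ with g i = b,
        (of (fun i j => if g i = g j then f (g i) i j else 0) *ᵥ v) i ^ 2
      = ∑ b ∈ univ.image g, ∑ i ∈ univ with g i = b, (f b *ᵥ w b) i ^ 2 := by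
        refine sum_congr rfl fun b _ => sum_congr rfl fun i hi => ?_
        rw [hrow, (mem_filter.1 hi).2]
    _ ≤ ∑ b ∈ univ.image g, ∑ i, (f b *ᵥ w b) i ^ 2 :=
        sum_le_sum fun b _ =>
          sum_le_sum_of_subset_of_nonneg (filter_subset _ _) fun _ _ _ => sq_nonneg _
    _ ≤ ∑ b ∈ univ.image g, c ^ 2 * ∑ j, w b j ^ 2 :=
        sum_le_sum fun b _ => (sum_sq_mulVec_le (f b) (w b)).trans (by gcongr; exact hf b)
    _ = c ^ 2 * ∑ j, v j ^ 2 := by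
        simp_rw [hw, ← mul_sum, sum_fiberwise_of_maps_to hg]

section Triangular

variable [LinearOrder n] {U : Matrix n n ℝ}

lemma IsUpperTriangular.inv (hU : U.IsUpperTriangular) (hunit : IsUnit U) :
    U⁻¹.IsUpperTriangular :=
  have := hunit.invertible
  blockTriangular_inv_of_blockTriangular hU

lemma IsUpperTriangular.inv_apply_self_mul_apply_self (hU : U.IsUpperTriangular)
    (hunit : IsUnit U) (i : n) : U⁻¹ i i * U i i = 1 := by
  have h := congr_fun (congr_fun (nonsing_inv_mul U ((isUnit_iff_isUnit_det U).1 hunit)) i) i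
  rwa [mul_apply, sum_eq_single i (fun k _ hk => ?_) (by simp), one_apply_eq] at h
  rcases lt_or_gt_of_ne hk with hki | hik
  · rw [hU.inv hunit hki, zero_mul]
  · rw [hU hik, mul_zero]

lemma IsUpperTriangular.abs_apply_self_sub_one_le (hU : U.IsUpperTriangular) {i : n}
    (hpos : 0 ≤ U i i) (h : ‖Uᵀ * U - 1‖ < 1) : |U i i - 1| ≤ ‖Uᵀ * U - 1‖ := by
  have hunit := isUnit_of_l2_opNorm_transpose_mul_self_sub_one_lt_one h
  have hup : U i i ^ 2 ≤ 1 + ‖Uᵀ * U - 1‖ :=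
    (sq_apply_le_l2_opNorm_sq U i i).trans (l2_opNorm_sq_le U)
  have hinv : U⁻¹ i i ^ 2 ≤ (1 - ‖Uᵀ * U - 1‖)⁻¹ :=
    (sq_apply_le_l2_opNorm_sq U⁻¹ i i).trans (l2_opNorm_inv_sq_le h)
  have hlow : 1 - ‖Uᵀ * U - 1‖ ≤ U i i ^ 2 := by
    have hprod := hU.inv_apply_self_mul_apply_self hunit i
    have h1 : 1 ≤ (1 - ‖Uᵀ * U - 1‖)⁻¹ * U i i ^ 2 :=
      calc 1 = U⁻¹ i i ^ 2 * U i i ^ 2 := by rw [← mul_pow, hprod, one_pow]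
        _ ≤ _ := by gcongr
    simpa using (le_inv_mul_iff₀ (by linarith)).1 h1
  rw [abs_le]
  constructor <;> nlinarith [norm_nonneg (Uᵀ * U - 1)]

lemma IsUpperTriangular.l2_opNorm_corner_le (hU : U.IsUpperTriangular) (hunit : IsUnit U)
    {p q : n → Prop} [DecidablePred p] [DecidablePred q] (hpq : ∀ i j, p i → q j → i < j) :
    ‖coordProj p * U * coordProj q‖ ≤ ‖U⁻¹‖ * ‖Uᵀ * U - 1‖ := by
  have hzero : coordProj p * U⁻¹ᵀ * coordProj q = 0 := by
    ext i j
    rw [coordProj_mul_mul_coordProj_apply]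
    split_ifs with h
    · exact hU.inv hunit (hpq i j h.1 h.2)
    · rfl
  have hfactor : coordProj p * U * coordProj q =
      coordProj p * U⁻¹ᵀ * (Uᵀ * U - 1) * coordProj q := by
    rw [Matrix.mul_sub, Matrix.mul_one, ← Matrix.mul_assoc _ Uᵀ U, Matrix.mul_assoc _ U⁻¹ᵀ Uᵀ,
      ← transpose_mul, mul_nonsing_inv U ((isUnit_iff_isUnit_det U).1 hunit), transpose_one,
      Matrix.mul_one, Matrix.sub_mul, hzero, sub_zero]
  rw [hfactor]
  calc _ ≤ ‖coordProj p‖ * ‖U⁻¹ᵀ‖ * ‖Uᵀ * U - 1‖ * ‖coordProj q‖ := by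
        grw [norm_mul_le, norm_mul_le, norm_mul_le]
    _ ≤ 1 * ‖U⁻¹‖ * ‖Uᵀ * U - 1‖ * 1 := by
        grw [l2_opNorm_coordProj_le, l2_opNorm_coordProj_le, l2_opNorm_transpose]
    _ = ‖U⁻¹‖ * ‖Uᵀ * U - 1‖ := by ring

end Triangular

section Dyadic

variable {T : ℕ} {U : Matrix (Fin T) (Fin T) ℝ}

/-- The entries `(i, j)` of `U` with `i` in the left and `j` in the right half of a common dyadic
block of length `2 ^ (t + 1)`. -/
def dyadicLevel (U : Matrix (Fin T) (Fin T) ℝ) (t : ℕ) : Matrix (Fin T) (Fin T) ℝ :=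
  of fun i j =>
    if (i : ℕ) / 2 ^ (t + 1) = (j : ℕ) / 2 ^ (t + 1) ∧ (i : ℕ) / 2 ^ t < (j : ℕ) / 2 ^ t then U i j
    else 0

lemma dyadicLevel_apply_of_isUpperTriangular (hU : U.IsUpperTriangular) (t : ℕ) (i j : Fin T) :
    dyadicLevel U t i j =
      ((if (i : ℕ) / 2 ^ (t + 1) = (j : ℕ) / 2 ^ (t + 1) then 1 else 0) -
        (if (i : ℕ) / 2 ^ t = (j : ℕ) / 2 ^ t then 1 else 0)) * U i j := by
  rcases le_or_gt i j with hij | hji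
  · have hle : (i : ℕ) / 2 ^ t ≤ (j : ℕ) / 2 ^ t := Nat.div_le_div_right hij
    have hmono : (i : ℕ) / 2 ^ t = (j : ℕ) / 2 ^ t →
        (i : ℕ) / 2 ^ (t + 1) = (j : ℕ) / 2 ^ (t + 1) := fun h => by
      rw [pow_succ, ← Nat.div_div_eq_div_mul, ← Nat.div_div_eq_div_mul, h]
    by_cases h : (i : ℕ) / 2 ^ t = (j : ℕ) / 2 ^ t
    · simp [dyadicLevel, h, hmono h]
    · have hlt : (i : ℕ) / 2 ^ t < (j : ℕ) / 2 ^ t := lt_of_le_of_ne hle h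
      by_cases h' : (i : ℕ) / 2 ^ (t + 1) = (j : ℕ) / 2 ^ (t + 1) <;>
        simp [dyadicLevel, h, h', hlt]
  · have hle : (j : ℕ) / 2 ^ t ≤ (i : ℕ) / 2 ^ t := Nat.div_le_div_right hji.le
    simp [dyadicLevel, hU hji, not_lt.2 hle]

lemma sub_one_eq_diagonal_add_sum_dyadicLevel (hU : U.IsUpperTriangular) {K : ℕ}
    (hK : T ≤ 2 ^ K) :
    U - 1 = diagonal (fun i => U i i - 1) + ∑ t ∈ range K, dyadicLevel U t := by
  ext i j
  rw [Matrix.sub_apply, Matrix.add_apply, Matrix.sum_apply,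
    sum_congr rfl fun t _ => dyadicLevel_apply_of_isUpperTriangular hU t i j, ← sum_mul,
    sum_range_sub (fun t => if (i : ℕ) / 2 ^ t = (j : ℕ) / 2 ^ t then (1 : ℝ) else 0),
    Nat.div_eq_of_lt (i.2.trans_le hK), Nat.div_eq_of_lt (j.2.trans_le hK)]
  by_cases h : i = j
  · subst h
    simp
  · simp [h, Fin.val_ne_of_ne h]

lemma IsUpperTriangular.l2_opNorm_dyadicLevel_le (hU : U.IsUpperTriangular) (hunit : IsUnit U)
    (t : ℕ) : ‖dyadicLevel U t‖ ≤ ‖U⁻¹‖ * ‖Uᵀ * U - 1‖ := by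
  -- the corner of the `q`-th dyadic block, split at its midpoint `(2 * q + 1) * 2 ^ t`
  let corner (q : ℕ) : Matrix (Fin T) (Fin T) ℝ :=
    coordProj (fun k : Fin T => (k : ℕ) < (2 * q + 1) * 2 ^ t) * U *
      coordProj (fun k : Fin T => (2 * q + 1) * 2 ^ t ≤ (k : ℕ))
  have hblock : dyadicLevel U t = of fun (i j : Fin T) =>
      if (i : ℕ) / 2 ^ (t + 1) = (j : ℕ) / 2 ^ (t + 1) then corner ((i : ℕ) / 2 ^ (t + 1)) i j
      else 0 := by
    ext i j
    simp only [dyadicLevel, of_apply, corner, coordProj_mul_mul_coordProj_apply]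
    by_cases h : (i : ℕ) / 2 ^ (t + 1) = (j : ℕ) / 2 ^ (t + 1)
    · rw [if_pos h]
      exact if_congr ((and_iff_right h).trans (Nat.div_two_pow_lt_div_two_pow_iff h)) rfl rfl
    · rw [if_neg h, if_neg fun h' => h h'.1]
  rw [hblock]
  exact l2_opNorm_blockwise_le (fun i : Fin T => (i : ℕ) / 2 ^ (t + 1)) corner (by positivity)
    fun q => hU.l2_opNorm_corner_le hunit fun i j hi hj => Fin.lt_def.2 (hi.trans_le hj)

lemma IsUpperTriangular.l2_opNorm_sub_one_le (hU : U.IsUpperTriangular)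
    (hdiag : ∀ i, 0 ≤ U i i) (h : ‖Uᵀ * U - 1‖ < 1) {K : ℕ} (hK : T ≤ 2 ^ K) :
    ‖U - 1‖ ≤ (1 + K * ‖U⁻¹‖) * ‖Uᵀ * U - 1‖ := by
  have hunit := isUnit_of_l2_opNorm_transpose_mul_self_sub_one_lt_one h
  have hdiagonal : ‖diagonal fun i => U i i - 1‖ ≤ ‖Uᵀ * U - 1‖ := by
    rw [l2_opNorm_diagonal]
    exact (pi_norm_le_iff_of_nonneg (norm_nonneg _)).2 fun i =>
      hU.abs_apply_self_sub_one_le (hdiag i) h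
  rw [sub_one_eq_diagonal_add_sum_dyadicLevel hU hK]
  calc _ ≤ ‖diagonal fun i => U i i - 1‖ + ∑ t ∈ range K, ‖dyadicLevel U t‖ :=
        (norm_add_le _ _).trans (by grw [norm_sum_le])
    _ ≤ ‖Uᵀ * U - 1‖ + ∑ t ∈ range K, ‖U⁻¹‖ * ‖Uᵀ * U - 1‖ :=
        add_le_add hdiagonal (sum_le_sum fun t _ => hU.l2_opNorm_dyadicLevel_le hunit t)
    _ = (1 + K * ‖U⁻¹‖) * ‖Uᵀ * U - 1‖ := by
        rw [sum_const, card_range, nsmul_eq_mul]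
        ring

end Dyadic

end Matrix

/-- **Perturbation bounds for the Cholesky factor** (Lemma 17).
If `U` is a `T × T` upper triangular matrix with nonnegative diagonal entries and `T ≥ 2`,
then `‖U − I‖_op ≤ 2 log₂(4T) ‖Uᵀ U − I‖_op` and
`‖U − I‖_op² ≤ 9 log₂(4T) ‖Uᵀ U − I‖_op`. -/
theorem cholesky_perturbation {T : ℕ} (hT : 2 ≤ T)
    (U : Matrix (Fin T) (Fin T) ℝ)
    (hUpper : ∀ i j : Fin T, j < i → U i j = 0)
    (hDiag : ∀ i : Fin T, 0 ≤ U i i) :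
    opNorm (U - 1) ≤ 2 * Real.logb 2 (4 * T) * opNorm (Uᵀ * U - 1) ∧
    opNorm (U - 1) ^ 2 ≤ 9 * Real.logb 2 (4 * T) * opNorm (Uᵀ * U - 1) := by
  rw [opNorm_eq_l2_opNorm, opNorm_eq_l2_opNorm]
  have hK : (1 : ℝ) ≤ Nat.clog 2 T := by exact_mod_cast Nat.clog_pos one_lt_two hT
  have hL : (Nat.clog 2 T : ℝ) + 1 ≤ Real.logb 2 (4 * T) :=
    Nat.clog_two_add_one_le_logb_four_mul (by omega)
  have hε := norm_nonneg (Uᵀ * U - 1)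
  have hx := norm_nonneg (U - 1)
  have hsq : ‖U - 1‖ ^ 2 ≤ 4 + 2 * ‖Uᵀ * U - 1‖ := by
    have h1 : ‖U - 1‖ ≤ ‖U‖ + 1 := (norm_sub_le _ _).trans (by grw [l2_opNorm_one_le])
    nlinarith [l2_opNorm_sq_le U, mul_self_le_mul_self hx h1, sq_nonneg (‖U‖ - 1)]
  by_cases hsmall : ‖Uᵀ * U - 1‖ ≤ 2 / 3
  · have hinv : ‖U⁻¹‖ ≤ 2 := by
      have h3 : (1 - ‖Uᵀ * U - 1‖)⁻¹ ≤ 3 := by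
        rw [inv_le_comm₀ (by linarith) (by norm_num)]
        linarith
      nlinarith [l2_opNorm_inv_sq_le (A := U) (by linarith), norm_nonneg U⁻¹]
    have hfirst : ‖U - 1‖ ≤ 2 * Real.logb 2 (4 * T) * ‖Uᵀ * U - 1‖ :=
      (IsUpperTriangular.l2_opNorm_sub_one_le hUpper hDiag (by linarith)
        (Nat.le_pow_clog one_lt_two T)).trans (by gcongr; nlinarith)
    exact ⟨hfirst, by nlinarith [mul_le_mul_of_nonneg_left hfirst hx]⟩
  · have h4 : ‖U - 1‖ ≤ 4 * ‖Uᵀ * U - 1‖ := by nlinarith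
    have hL2 : 2 ≤ Real.logb 2 (4 * T) := by linarith
    constructor <;> nlinarith [mul_le_mul_of_nonneg_right hL2 hε]

end
end

section
/- Let X be a Hilbert space and consider the discrete-time system v_t = h_t(v_{<t}) + u_t for t ∈ [T], where h_t : X^{t−1} → X is measurable (h_1 constant) and u_t ∈ X is a control term; let φ_{≤T} : X^T → X^T be the map sending the control sequence u_{≤T} = (u_1,…,u_T) to the state sequence v_{≤T} = (v_1,…,v_T). If Lip(h_t) ≤ L for all t ∈ [T], then φ_{≤T} is Lipschitz continuous with Lip(φ_{≤T}) ≤ √T (1 + L)^{T−1}. -/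
/-!
With `δ = φ(u) - φ(u')`, the Lipschitz bound on `h_t` gives
`‖δ_t‖ ≤ L ‖δ_{<t}‖ + ‖u_t - u'_t‖`. Since `x² + (L x + e)² ≤ (1 + L)² (x² + e²)`, each new
time step multiplies the ℓ² bound by at most `1 + L`, so `‖δ‖ ≤ (1 + L)^{T-1} ‖u - u'‖`.
-/

open Finset

noncomputable section

/-- ℓ² norm of a finite tuple of Hilbert-space vectors. -/
def l2norm {X : Type*} [NormedAddCommGroup X] {k : ℕ} (v : Fin k → X) : ℝ :=
  Real.sqrt (∑ s, ‖v s‖ ^ 2)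

/-- The state sequence of the discrete-time system `v_t = h_t(v_{<t}) + u_t`, as a function
`φ_{≤T}` of the control sequence `u`. -/
def phiSeq {X : Type*} [NormedAddCommGroup X] {T : ℕ}
    (h : ∀ t : Fin T, (Fin t.1 → X) → X) (u : Fin T → X) : Fin T → X :=
  fun t => h t (fun s => phiSeq h u ⟨s.1, s.2.trans t.isLt⟩) + u t
termination_by t => t.1
decreasing_by exact s.2

section l2norm

variable {Y : Type*} [NormedAddCommGroup Y]

lemma l2norm_nonneg {k : ℕ} (v : Fin k → Y) : 0 ≤ l2norm v :=
  Real.sqrt_nonneg _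

lemma l2norm_fin_zero (v : Fin 0 → Y) : l2norm v = 0 := by
  simp [l2norm]

lemma l2norm_fin_one (v : Fin 1 → Y) : l2norm v = ‖v 0‖ := by
  simp [l2norm, Real.sqrt_sq (norm_nonneg _)]

lemma sq_l2norm_castSucc {k : ℕ} (v : Fin (k + 1) → Y) :
    l2norm v ^ 2 = l2norm (fun s => v s.castSucc) ^ 2 + ‖v (Fin.last k)‖ ^ 2 := by
  simp only [l2norm, Real.sq_sqrt (sum_nonneg fun _ _ => sq_nonneg _)]
  exact Fin.sum_univ_castSucc _

end l2norm

lemma sq_add_sq_mul_add_le {L : ℝ} (hL : 0 ≤ L) (x e : ℝ) :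
    x ^ 2 + (L * x + e) ^ 2 ≤ (1 + L) ^ 2 * (x ^ 2 + e ^ 2) := by
  nlinarith [mul_nonneg hL (sq_nonneg (x - e)), mul_nonneg (mul_nonneg hL hL) (sq_nonneg e)]

/-- A discrete Grönwall inequality in ℓ². -/
theorem l2norm_le_of_norm_le_mul_l2norm_prefix_add {Y Z : Type*} [NormedAddCommGroup Y]
    [NormedAddCommGroup Z] {L : ℝ} (hL : 0 ≤ L) :
    ∀ {n : ℕ} (v : Fin (n + 1) → Y) (w : Fin (n + 1) → Z),
      (∀ t, ‖v t‖ ≤ L * l2norm (fun s : Fin t => v (Fin.castLE t.isLt.le s)) + ‖w t‖) →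
      l2norm v ≤ (1 + L) ^ n * l2norm w
  | 0, v, w, hvw => by
    simpa [l2norm_fin_one, l2norm_fin_zero] using hvw 0
  | n + 1, v, w, hvw => by
    set x := l2norm (fun s => v s.castSucc)
    set e := ‖w (Fin.last (n + 1))‖
    have hlast : ‖v (Fin.last (n + 1))‖ ≤ L * x + e := hvw (Fin.last (n + 1))
    have hprefix : x ≤ (1 + L) ^ n * l2norm (fun s => w s.castSucc) :=
      l2norm_le_of_norm_le_mul_l2norm_prefix_add hL _ _ fun t => hvw t.castSucc
    have hc : 1 ≤ (1 + L) ^ n := one_le_pow₀ (by linarith)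
    have hw := l2norm_nonneg w
    rw [← pow_le_pow_iff_left₀ (l2norm_nonneg v) (by positivity) two_ne_zero,
      sq_l2norm_castSucc v, mul_pow, sq_l2norm_castSucc w]
    calc x ^ 2 + ‖v (Fin.last (n + 1))‖ ^ 2
        ≤ x ^ 2 + (L * x + e) ^ 2 := by gcongr
      _ ≤ (1 + L) ^ 2 * (x ^ 2 + e ^ 2) := sq_add_sq_mul_add_le hL x e
      _ ≤ (1 + L) ^ 2 * (((1 + L) ^ n) ^ 2 * l2norm (fun s => w s.castSucc) ^ 2
            + ((1 + L) ^ n) ^ 2 * e ^ 2) := by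
        gcongr
        · rw [← mul_pow]
          exact pow_le_pow_left₀ (l2norm_nonneg _) hprefix 2
        · exact le_mul_of_one_le_left (sq_nonneg e) (one_le_pow₀ hc)
      _ = ((1 + L) ^ (n + 1)) ^ 2 * (l2norm (fun s => w s.castSucc) ^ 2 + e ^ 2) := by ring

lemma phiSeq_apply {X : Type*} [NormedAddCommGroup X] {T : ℕ}
    (h : ∀ t : Fin T, (Fin t.1 → X) → X) (u : Fin T → X) (t : Fin T) :
    phiSeq h u t = h t (fun s => phiSeq h u (Fin.castLE t.isLt.le s)) + u t := by
  rw [phiSeq]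
  rfl

lemma norm_phiSeq_sub_le {X : Type*} [NormedAddCommGroup X] {T : ℕ}
    {h : ∀ t : Fin T, (Fin t.1 → X) → X} {L : ℝ}
    (hLip : ∀ t : Fin T, ∀ a b : Fin t.1 → X, ‖h t a - h t b‖ ≤ L * l2norm (a - b))
    (u u' : Fin T → X) (t : Fin T) :
    ‖(phiSeq h u - phiSeq h u') t‖ ≤
      L * l2norm (fun s : Fin t => (phiSeq h u - phiSeq h u') (Fin.castLE t.isLt.le s))
        + ‖(u - u') t‖ := by
  rw [Pi.sub_apply, phiSeq_apply, phiSeq_apply, add_sub_add_comm]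
  exact (norm_add_le _ _).trans (add_le_add_left (hLip t _ _) _)

theorem control_to_state_lipschitz_general {X : Type*} [NormedAddCommGroup X] {T : ℕ}
    (h : ∀ t : Fin T, (Fin t.1 → X) → X) (L : ℝ) (hL : 0 ≤ L)
    (hLip : ∀ t : Fin T, ∀ a b : Fin t.1 → X, ‖h t a - h t b‖ ≤ L * l2norm (a - b)) :
    ∀ u u' : Fin T → X,
      l2norm (phiSeq h u - phiSeq h u') ≤
        Real.sqrt T * (1 + L) ^ (T - 1) * l2norm (u - u') := by
  intro u u'
  rcases T with _ | n
  · simp [l2norm_fin_zero]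
  have hsqrt : 1 ≤ Real.sqrt (n + 1 : ℕ) := Real.one_le_sqrt.mpr (by simp)
  calc l2norm (phiSeq h u - phiSeq h u')
      ≤ (1 + L) ^ n * l2norm (u - u') :=
        l2norm_le_of_norm_le_mul_l2norm_prefix_add hL _ _ (norm_phiSeq_sub_le hLip u u')
    _ ≤ Real.sqrt (n + 1 : ℕ) * (1 + L) ^ (n + 1 - 1) * l2norm (u - u') := by
      rw [Nat.add_sub_cancel, mul_assoc]
      exact le_mul_of_one_le_left (mul_nonneg (by positivity) (l2norm_nonneg _)) hsqrt

/-- **Stability of discrete-time systems** (Lemma 19). If every `h_t` is `L`-Lipschitz (with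
respect to the ℓ² norms on products), then the control-to-state map `φ_{≤T}` is Lipschitz with
constant at most `√T (1 + L)^{T−1}`. -/
theorem control_to_state_lipschitz {X : Type*} [NormedAddCommGroup X]
    [InnerProductSpace ℝ X] [CompleteSpace X] {T : ℕ}
    (h : ∀ t : Fin T, (Fin t.1 → X) → X) (L : ℝ) (hL : 0 ≤ L)
    (hLip : ∀ t : Fin T, ∀ a b : Fin t.1 → X, ‖h t a - h t b‖ ≤ L * l2norm (a - b)) :
    ∀ u u' : Fin T → X,
      l2norm (phiSeq h u - phiSeq h u') ≤
        Real.sqrt T * (1 + L) ^ (T - 1) * l2norm (u - u') :=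
  control_to_state_lipschitz_general h L hL hLip

end
end

section
/- Let X be a Hilbert space and let x = (x_t)_{t∈[T]} be generated by x_t = h_t(x_{<t}) (i.e., the system v_t = h_t(v_{<t}) + u_t with zero control), where h_t : X^{t−1} → X is measurable (h_1 constant). Let y = (y_t)_{t∈[T]} be any other sequence in X, and suppose there are nonnegative numbers a_t, b_t for t ∈ [T] such that ‖h_t(y_{<t} + u) − h_t(y_{<t})‖ ≤ a_t ‖u‖ + b_t for all u ∈ X^{t−1}. Then ‖x − y‖ ≤ ( ∏_{t=2}^{T} (1 + a_t) ) Σ_{t=1}^{T} ( b_t + ‖y_t − h_t(y_{<t})‖ ), where ‖x − y‖ is the norm of the stacked difference in X^T. In particular, if Lip(h_t) ≤ L for all t ∈ [T], then ‖x − y‖ ≤ (1 + L)^{T−1} Σ_{t=1}^{T} ‖y_t − h_t(y_{<t})‖. -/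
open Finset

noncomputable section

/-- Restriction of a length-`T` sequence to the indices before `t`. -/
def restr {α : Type*} {T : ℕ} (y : Fin T → α) (t : Fin T) : Fin t.1 → α :=
  fun s => y ⟨s.1, s.2.trans t.isLt⟩

lemma sqrt_step (E d a c : ℝ) (hE : 0 ≤ E) (ha : 0 ≤ a) (hc : 0 ≤ c) (hd : 0 ≤ d)
    (hbd : d ≤ a * E + c) : Real.sqrt (E ^ 2 + d ^ 2) ≤ (1 + a) * E + c := by
  have h1 : E ^ 2 + d ^ 2 ≤ ((1 + a) * E + c) ^ 2 := by
    nlinarith [mul_nonneg (sub_nonneg.2 hbd) (by positivity : (0:ℝ) ≤ a * E + c + d),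
      mul_nonneg hE hc, mul_nonneg (mul_nonneg ha hE) hE]
  calc Real.sqrt (E ^ 2 + d ^ 2) ≤ Real.sqrt (((1 + a) * E + c) ^ 2) := Real.sqrt_le_sqrt h1
    _ = (1 + a) * E + c := Real.sqrt_sq (by positivity)

/-- **Stability bound for comparison of sequences** (Lemma 20). Let `x` be generated by
`x_t = h_t(x_{<t})` (zero control) and let `y` be any other sequence. If
`‖h_t(y_{<t} + u) − h_t(y_{<t})‖ ≤ a_t ‖u‖ + b_t` for all `u`, then
`‖x − y‖ ≤ (∏_{t=2}^T (1 + a_t)) Σ_{t=1}^T (b_t + ‖y_t − h_t(y_{<t})‖)`; in particular, if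
every `h_t` is `L`-Lipschitz then `‖x − y‖ ≤ (1 + L)^{T−1} Σ_{t=1}^T ‖y_t − h_t(y_{<t})‖`. -/
theorem stability_comparison {X : Type*} [NormedAddCommGroup X]
    [InnerProductSpace ℝ X] [CompleteSpace X] {T : ℕ}
    (h : ∀ t : Fin T, (Fin t.1 → X) → X) (y : Fin T → X) :
    (∀ a b : Fin T → ℝ, (∀ t, 0 ≤ a t) → (∀ t, 0 ≤ b t) →
      (∀ t : Fin T, ∀ u : Fin t.1 → X,
        ‖h t (restr y t + u) - h t (restr y t)‖ ≤ a t * l2norm u + b t) →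
      l2norm (phiSeq h 0 - y) ≤
        (∏ t ∈ Finset.univ.filter (fun t : Fin T => 0 < t.1), (1 + a t)) *
          ∑ t, (b t + ‖y t - h t (restr y t)‖)) ∧
    (∀ L : ℝ, 0 ≤ L →
      (∀ t : Fin T, ∀ a b : Fin t.1 → X, ‖h t a - h t b‖ ≤ L * l2norm (a - b)) →
      l2norm (phiSeq h 0 - y) ≤ (1 + L) ^ (T - 1) * ∑ t, ‖y t - h t (restr y t)‖) := by
  classical
  set x : Fin T → X := phiSeq h 0 with hxdef
  have hx : ∀ t, x t = h t (restr x t) := by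
    intro t
    conv_lhs => rw [hxdef, phiSeq]
    simp only [Pi.zero_apply, add_zero]; rfl
  have part1 : ∀ a b : Fin T → ℝ, (∀ t, 0 ≤ a t) → (∀ t, 0 ≤ b t) →
      (∀ t : Fin T, ∀ u : Fin t.1 → X,
        ‖h t (restr y t + u) - h t (restr y t)‖ ≤ a t * l2norm u + b t) →
      l2norm (x - y) ≤
        (∏ t ∈ Finset.univ.filter (fun t : Fin T => 0 < t.1), (1 + a t)) *
          ∑ t, (b t + ‖y t - h t (restr y t)‖) := by
    intro a b ha hb hab
    set c : Fin T → ℝ := fun t => b t + ‖y t - h t (restr y t)‖ with hcdef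
    have hc0 : ∀ t, 0 ≤ c t := fun t => add_nonneg (hb t) (norm_nonneg _)
    set A : ℕ → ℝ := fun s => if hs : s < T then a ⟨s, hs⟩ else 0 with hAdef
    set C : ℕ → ℝ := fun s => if hs : s < T then c ⟨s, hs⟩ else 0 with hCdef
    set D : ℕ → ℝ := fun s => if hs : s < T then ‖x ⟨s, hs⟩ - y ⟨s, hs⟩‖ else 0 with hDdef
    have hAeq : ∀ t : Fin T, A t.1 = a t := by
      intro t; simp only [hAdef]; rw [dif_pos t.2]
    have hCeq : ∀ t : Fin T, C t.1 = c t := by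
      intro t; simp only [hCdef]; rw [dif_pos t.2]
    have hDeq : ∀ t : Fin T, D t.1 = ‖x t - y t‖ := by
      intro t; simp only [hDdef]; rw [dif_pos t.2]
    have hA0 : ∀ s, 0 ≤ A s := by
      intro s; rw [hAdef]; dsimp only; split <;> [exact ha _; exact le_rfl]
    have hC0 : ∀ s, 0 ≤ C s := by
      intro s; rw [hCdef]; dsimp only; split <;> [exact hc0 _; exact le_rfl]
    have hD0 : ∀ s, 0 ≤ D s := by
      intro s; rw [hDdef]; dsimp only; split <;> [exact norm_nonneg _; exact le_rfl]
    have key : ∀ n, n ≤ T →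
        Real.sqrt (∑ s ∈ range n, D s ^ 2) ≤
          (∏ s ∈ (range n).filter (fun s => 0 < s), (1 + A s)) * ∑ s ∈ range n, C s := by
      intro n
      induction n with
      | zero => simp
      | succ n ih =>
        intro hn1
        have hn : n < T := hn1
        have ihn := ih hn.le
        set E : ℝ := Real.sqrt (∑ s ∈ range n, D s ^ 2) with hEdef
        have hE0 : 0 ≤ E := Real.sqrt_nonneg _
        have hEsq : E ^ 2 = ∑ s ∈ range n, D s ^ 2 :=
          Real.sq_sqrt (Finset.sum_nonneg fun s _ => sq_nonneg _)
        set P : ℝ := ∏ s ∈ (range n).filter (fun s => 0 < s), (1 + A s) with hPdef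
        have hP1 : 1 ≤ P := by
          rw [hPdef]
          calc (1:ℝ) = ∏ _s ∈ (range n).filter (fun s => 0 < s), (1:ℝ) :=
                (Finset.prod_const_one).symm
            _ ≤ ∏ s ∈ (range n).filter (fun s => 0 < s), (1 + A s) :=
                Finset.prod_le_prod (fun s _ => zero_le_one)
                  (fun s _ => by linarith [hA0 s])
        set S : ℝ := ∑ s ∈ range n, C s with hSdef
        have hS0 : 0 ≤ S := Finset.sum_nonneg fun s _ => hC0 s
        -- the per-step bound
        have hDle : D n ≤ A n * E + C n := by
          set t : Fin T := ⟨n, hn⟩ with htdef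
          set u : Fin t.1 → X := fun s => x ⟨s.1, s.2.trans hn⟩ - y ⟨s.1, s.2.trans hn⟩
            with hudef
          have hru : restr y t + u = restr x t := by
            funext s
            simp only [Pi.add_apply, hudef, restr]
            abel
          have hlu : l2norm u = E := by
            rw [l2norm, hEdef]
            congr 1
            rw [← Fin.sum_univ_eq_sum_range (fun s => D s ^ 2) n]
            refine Finset.sum_congr rfl fun s _ => ?_
            rw [hudef]; dsimp only; rw [hDeq ⟨s.1, s.2.trans hn⟩]
          have hsplit : x t - y t =
              (h t (restr y t + u) - h t (restr y t)) + (h t (restr y t) - y t) := by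
            rw [hru, ← hx t]; abel
          have hAn : A n = a t := hAeq t
          have hCn : C n = c t := hCeq t
          have hDn : D n = ‖x t - y t‖ := hDeq t
          calc D n = ‖x t - y t‖ := hDn
            _ ≤ ‖h t (restr y t + u) - h t (restr y t)‖ + ‖h t (restr y t) - y t‖ := by
                rw [hsplit]; exact norm_add_le _ _
            _ ≤ (a t * l2norm u + b t) + ‖y t - h t (restr y t)‖ := by
                refine add_le_add (hab t u) (le_of_eq (norm_sub_rev _ _))
            _ = A n * E + C n := by rw [hlu, hAn, hCn, hcdef]; ring
        have hstep : Real.sqrt (∑ s ∈ range (n + 1), D s ^ 2) ≤ (1 + A n) * E + C n := by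
          rw [Finset.sum_range_succ, ← hEsq]
          exact sqrt_step E (D n) (A n) (C n) hE0 (hA0 n) (hC0 n) (hD0 n) hDle
        refine hstep.trans ?_
        rw [Finset.sum_range_succ]
        rcases Nat.eq_zero_or_pos n with hn0 | hn0
        · subst hn0
          simp only [hEdef, hSdef, Finset.range_zero, Finset.sum_empty, Real.sqrt_zero,
            Finset.range_one]
          have : (range 1).filter (fun s => 0 < s) = (∅ : Finset ℕ) := by
            ext s; simp
          rw [this]
          simp [hEdef]
        · have hfil : (range (n + 1)).filter (fun s => 0 < s) =
              insert n ((range n).filter (fun s => 0 < s)) := by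
            rw [Finset.range_add_one, Finset.filter_insert, if_pos hn0]
          rw [hfil, Finset.prod_insert (by simp)]
          have h1 : (1 : ℝ) ≤ 1 + A n := by linarith [hA0 n]
          nlinarith [mul_le_mul_of_nonneg_left ihn (by linarith : (0:ℝ) ≤ 1 + A n),
            mul_nonneg (hC0 n) (sub_nonneg.2 (one_le_mul_of_one_le_of_one_le h1 hP1)),
            hC0 n, hP1, hS0, hE0]
    have hmain := key T le_rfl
    -- convert ℕ-indexed statement to Fin-indexed goal
    have hl2 : l2norm (x - y) = Real.sqrt (∑ s ∈ range T, D s ^ 2) := by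
      rw [l2norm]
      congr 1
      rw [← Fin.sum_univ_eq_sum_range (fun s => D s ^ 2) T]
      refine Finset.sum_congr rfl fun s _ => ?_
      rw [hDeq s, Pi.sub_apply]
    have hprod : (∏ t ∈ Finset.univ.filter (fun t : Fin T => 0 < t.1), (1 + a t))
        = ∏ s ∈ (range T).filter (fun s => 0 < s), (1 + A s) := by
      rw [Finset.prod_filter, Finset.prod_filter,
        ← Fin.prod_univ_eq_prod_range (fun s => if 0 < s then 1 + A s else 1) T]
      refine Finset.prod_congr rfl fun t _ => ?_
      by_cases ht : 0 < t.1
      · rw [if_pos ht, if_pos ht, hAeq t]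
      · rw [if_neg ht, if_neg ht]
    have hsum : (∑ t, c t) = ∑ s ∈ range T, C s := by
      rw [← Fin.sum_univ_eq_sum_range C T]
      refine Finset.sum_congr rfl fun t _ => ?_
      exact (hCeq t).symm
    rw [hl2, hprod, hsum]
    exact hmain
  refine ⟨part1, ?_⟩
  intro L hL hLip
  have hb : ∀ t : Fin T, (0:ℝ) ≤ (fun _ : Fin T => (0:ℝ)) t := fun _ => le_rfl
  have h1 := part1 (fun _ => L) (fun _ => 0) (fun _ => hL) hb ?_
  · have hcard : (Finset.univ.filter (fun t : Fin T => 0 < t.1)).card = T - 1 := by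
      rw [Finset.card_filter]
      rw [Fin.sum_univ_eq_sum_range (fun s => if 0 < s then 1 else 0) T]
      rw [← Finset.card_filter]
      have : (range T).filter (fun s => 0 < s) = Finset.Ico 1 T := by
        ext s; simp; omega
      rw [this, Nat.card_Ico]
    rw [Finset.prod_const, hcard] at h1
    simpa using h1
  · intro t u
    have := hLip t (restr y t + u) (restr y t)
    simpa using this
end
end
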